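/- arXiv:1107.6032 — 4 statements merged into one kernel-verified Lean document; each statement's English description precedes it below -/
import Mathlib

section
/- (Fixed point property.) Let C be a symmetric monoidal category, M a dualizable object, Δ : M → M ⊗ P a morphism, f : M → M an endomorphism, and h : P → P a morphism such that (f ⊗ h) ∘ Δ = Δ ∘ f. Then h ∘ tr(Δ ∘ f) = tr(Δ ∘ f), where tr(Δ ∘ f) : I → P is the trace of the morphism Δ ∘ f : M → M ⊗ P (regarding its source as I ⊗ M). -/
open CategoryTheory MonoidalCategory

set_option linter.unusedSectionVars false

universe v u

variable {C : Type u} [Category.{v} C] [MonoidalCategory C] [SymmetricCategory C]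

/-- `(Mᵛ, η, ε)` is a dual pair for `M`: the coevaluation `η : I ⟶ M ⊗ Mᵛ` and
evaluation `ε : Mᵛ ⊗ M ⟶ I` satisfy the triangle identities. -/
def IsDualPair (M Mv : C) (η : 𝟙_ C ⟶ M ⊗ Mv) (ε : Mv ⊗ M ⟶ 𝟙_ C) : Prop :=
  ((λ_ M).inv ≫ η ▷ M ≫ (α_ M Mv M).hom ≫ M ◁ ε ≫ (ρ_ M).hom = 𝟙 M) ∧
  ((ρ_ Mv).inv ≫ Mv ◁ η ≫ (α_ Mv M Mv).inv ≫ ε ▷ Mv ≫ (λ_ Mv).hom = 𝟙 Mv)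

/-- The twisted trace of `f : Q ⊗ M ⟶ M ⊗ P` with respect to the dual pair `(Mᵛ, η, ε)`:
`Q ⟶ Q ⊗ (M ⊗ Mᵛ) ⟶ (Q ⊗ M) ⊗ Mᵛ ⟶ (M ⊗ P) ⊗ Mᵛ ⟶ (Mᵛ ⊗ M) ⊗ P ⟶ P`. -/
def trTw (M Mv : C) (η : 𝟙_ C ⟶ M ⊗ Mv) (ε : Mv ⊗ M ⟶ 𝟙_ C) {Q P : C}
    (f : Q ⊗ M ⟶ M ⊗ P) : Q ⟶ P :=
  (ρ_ Q).inv ≫ Q ◁ η ≫ (α_ Q M Mv).inv ≫ f ▷ Mv ≫ (β_ (M ⊗ P) Mv).hom ≫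
    (α_ Mv M P).inv ≫ ε ▷ P ≫ (λ_ P).hom

/-- The trace of an endomorphism `f : M ⟶ M` of a dualizable object `M`:
`I ⟶ M ⊗ Mᵛ ⟶ M ⊗ Mᵛ ⟶ Mᵛ ⊗ M ⟶ I`. -/
def trEnd (M Mv : C) (η : 𝟙_ C ⟶ M ⊗ Mv) (ε : Mv ⊗ M ⟶ 𝟙_ C) (f : M ⟶ M) :
    𝟙_ C ⟶ 𝟙_ C :=
  η ≫ f ▷ Mv ≫ (β_ M Mv).hom ≫ ε

lemma exists_mate {M Mv : C} (η : 𝟙_ C ⟶ M ⊗ Mv) (ε : Mv ⊗ M ⟶ 𝟙_ C)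
    (hd : IsDualPair M Mv η ε) (f : M ⟶ M) :
    ∃ fv : Mv ⟶ Mv, (η ≫ f ▷ Mv = η ≫ M ◁ fv) ∧ (fv ▷ M ≫ ε = Mv ◁ f ≫ ε) := by
  letI p : ExactPairing M Mv :=
    { coevaluation' := η
      evaluation' := ε
      coevaluation_evaluation' := by
        rw [← cancel_epi (ρ_ Mv).inv, ← cancel_mono (λ_ Mv).hom]
        simpa using hd.2
      evaluation_coevaluation' := by
        rw [← cancel_epi (λ_ M).inv, ← cancel_mono (ρ_ M).hom]
        simpa using hd.1 }
  letI : HasRightDual M := ⟨Mv⟩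
  exact ⟨rightAdjointMate f, (coevaluation_comp_rightAdjointMate f).symm,
    rightAdjointMate_comp_evaluation f⟩

lemma trTw_unit {M Mv P : C} (η : 𝟙_ C ⟶ M ⊗ Mv) (ε : Mv ⊗ M ⟶ 𝟙_ C) (g : M ⟶ M ⊗ P) :
    trTw M Mv η ε ((λ_ M).hom ≫ g) =
      η ≫ g ▷ Mv ≫ (β_ (M ⊗ P) Mv).hom ≫ (α_ Mv M P).inv ≫ ε ▷ P ≫ (λ_ P).hom := by
  dsimp [trTw]
  simp only [comp_whiskerRight, Category.assoc]
  have : (ρ_ (𝟙_ C)).inv ≫ (𝟙_ C) ◁ η ≫ (α_ (𝟙_ C) M Mv).inv ≫ (λ_ M).hom ▷ Mv = η := by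
    rw [← unitors_inv_equal, ← leftUnitor_inv_naturality_assoc]
    have hstr : (λ_ (M ⊗ Mv)).inv ≫ (α_ (𝟙_ C) M Mv).inv ≫ (λ_ M).hom ▷ Mv = 𝟙 _ := by
      monoidal
    rw [hstr, Category.comp_id]
  rw [reassoc_of% this]


/-- The fixed point property: if `(f ⊗ h) ∘ Δ = Δ ∘ f` then
`h ∘ tr(Δ ∘ f) = tr(Δ ∘ f)`, where `Δ ∘ f : M ⟶ M ⊗ P` is regarded as having source
`I ⊗ M` via the unit isomorphism. -/
theorem trace_fixed_point {M Mv P : C}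
    (η : 𝟙_ C ⟶ M ⊗ Mv) (ε : Mv ⊗ M ⟶ 𝟙_ C) (hd : IsDualPair M Mv η ε)
    (Δ : M ⟶ M ⊗ P) (f : M ⟶ M) (h : P ⟶ P)
    (hc : Δ ≫ (f ⊗ₘ h) = f ≫ Δ) :
    trTw M Mv η ε ((λ_ M).hom ≫ f ≫ Δ) ≫ h = trTw M Mv η ε ((λ_ M).hom ≫ f ≫ Δ) := by
  obtain ⟨fv, hA, hB⟩ := exists_mate η ε hd f
  -- cyclicity: tr(f ≫ Δ) = tr(Δ ≫ f ▷ P)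
  have cyc : trTw M Mv η ε ((λ_ M).hom ≫ f ≫ Δ) =
      trTw M Mv η ε ((λ_ M).hom ≫ Δ ≫ f ▷ P) := by
    rw [trTw_unit, trTw_unit]
    simp only [comp_whiskerRight, Category.assoc]
    rw [reassoc_of% hA]
    rw [whisker_exchange_assoc]
    rw [BraidedCategory.braiding_naturality_right_assoc]
    rw [associator_inv_naturality_left_assoc]
    rw [← comp_whiskerRight_assoc, hB, comp_whiskerRight_assoc]
    simp only [BraidedCategory.braiding_naturality_left_assoc,
      associator_inv_naturality_middle_assoc]
  -- naturality in P
  have nat : ∀ g : M ⟶ M ⊗ P,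
      trTw M Mv η ε ((λ_ M).hom ≫ g ≫ M ◁ h) = trTw M Mv η ε ((λ_ M).hom ≫ g) ≫ h := by
    intro g
    rw [trTw_unit, trTw_unit]
    simp only [comp_whiskerRight, Category.assoc]
    rw [BraidedCategory.braiding_naturality_left_assoc]
    rw [associator_inv_naturality_right_assoc]
    rw [whisker_exchange_assoc]
    rw [leftUnitor_naturality]
  have harg : (λ_ M).hom ≫ (Δ ≫ f ▷ P) ≫ M ◁ h = (λ_ M).hom ≫ f ≫ Δ := by
    rw [Category.assoc, ← MonoidalCategory.tensorHom_def, hc]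
  rw [cyc, ← nat (Δ ≫ f ▷ P), harg, ← cyc]
end

section
/- (Sliding.) Let C be a symmetric monoidal category, let M and N be dualizable objects, and let f : Q ⊗ M → N ⊗ P and h : N → M be morphisms. Then tr((h ⊗ id_P) ∘ f) = tr(f ∘ (id_Q ⊗ h)), where the left-hand side is the trace with respect to M of (h ⊗ id_P) ∘ f : Q ⊗ M → M ⊗ P and the right-hand side is the trace with respect to N of f ∘ (id_Q ⊗ h) : Q ⊗ N → N ⊗ P. -/
open CategoryTheory MonoidalCategory

universe v u

variable {C : Type u} [Category.{v} C] [MonoidalCategory C] [SymmetricCategory C]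

/-- Extract an `ExactPairing` from an `IsDualPair`. -/
def IsDualPair.exactPairing {M Mv : C} {η : 𝟙_ C ⟶ M ⊗ Mv} {ε : Mv ⊗ M ⟶ 𝟙_ C}
    (h : IsDualPair M Mv η ε) : ExactPairing M Mv where
  coevaluation' := η
  evaluation' := ε
  coevaluation_evaluation' := by
    rw [← cancel_epi (ρ_ Mv).inv, ← cancel_mono (λ_ Mv).hom]
    simpa using h.2
  evaluation_coevaluation' := by
    rw [← cancel_epi (λ_ M).inv, ← cancel_mono (ρ_ M).hom]
    simpa using h.1

/-- Sliding: for `f : Q ⊗ M ⟶ N ⊗ P` and `h : N ⟶ M` with `M, N` dualizable,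
`tr_M((h ⊗ id_P) ∘ f) = tr_N(f ∘ (id_Q ⊗ h))`. -/
theorem trace_sliding {M Mv N Nv Q P : C}
    (ηM : 𝟙_ C ⟶ M ⊗ Mv) (εM : Mv ⊗ M ⟶ 𝟙_ C) (hM : IsDualPair M Mv ηM εM)
    (ηN : 𝟙_ C ⟶ N ⊗ Nv) (εN : Nv ⊗ N ⟶ 𝟙_ C) (hN : IsDualPair N Nv ηN εN)
    (f : Q ⊗ M ⟶ N ⊗ P) (h : N ⟶ M) :
    trTw M Mv ηM εM (f ≫ h ▷ P) = trTw N Nv ηN εN (Q ◁ h ≫ f) := by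
  letI : ExactPairing M Mv := hM.exactPairing
  letI : ExactPairing N Nv := hN.exactPairing
  letI : HasRightDual M := ⟨Mv⟩
  letI : HasRightDual N := ⟨Nv⟩
  let g : Mv ⟶ Nv := hᘁ
  have lemA : ηM ≫ M ◁ g = ηN ≫ h ▷ Nv := coevaluation_comp_rightAdjointMate h
  have lemB : g ▷ N ≫ εN = Mv ◁ h ≫ εM := rightAdjointMate_comp_evaluation h
  calc trTw M Mv ηM εM (f ≫ h ▷ P)
      = 𝟙 Q ⊗≫ Q ◁ ηM ⊗≫ f ▷ Mv ⊗≫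
          ((h ▷ P) ▷ Mv ≫ (β_ (M ⊗ P) Mv).hom) ⊗≫ εM ▷ P ⊗≫ 𝟙 P := by
        dsimp only [trTw]; rw [comp_whiskerRight]; monoidal
    _ = 𝟙 Q ⊗≫ Q ◁ ηM ⊗≫ f ▷ Mv ⊗≫ (β_ (N ⊗ P) Mv).hom ⊗≫
          ((Mv ◁ h) ▷ P ≫ εM ▷ P) ⊗≫ 𝟙 P := by
        rw [BraidedCategory.braiding_naturality_left]; monoidal
    _ = 𝟙 Q ⊗≫ Q ◁ ηM ⊗≫ f ▷ Mv ⊗≫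
          ((β_ (N ⊗ P) Mv).hom ≫ g ▷ (N ⊗ P)) ⊗≫ εN ▷ P ⊗≫ 𝟙 P := by
        rw [← comp_whiskerRight, ← lemB, comp_whiskerRight]; monoidal
    _ = 𝟙 Q ⊗≫ Q ◁ ηM ⊗≫ (f ▷ Mv ≫ (N ⊗ P) ◁ g) ⊗≫
          (β_ (N ⊗ P) Nv).hom ⊗≫ εN ▷ P ⊗≫ 𝟙 P := by
        rw [← BraidedCategory.braiding_naturality_right]; monoidal
    _ = 𝟙 Q ⊗≫ (Q ◁ (ηM ≫ M ◁ g)) ⊗≫ f ▷ Nv ⊗≫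
          (β_ (N ⊗ P) Nv).hom ⊗≫ εN ▷ P ⊗≫ 𝟙 P := by
        rw [← whisker_exchange, MonoidalCategory.whiskerLeft_comp]; monoidal
    _ = 𝟙 Q ⊗≫ Q ◁ ηN ⊗≫ ((Q ◁ h) ▷ Nv ≫ f ▷ Nv) ⊗≫
          (β_ (N ⊗ P) Nv).hom ⊗≫ εN ▷ P ⊗≫ 𝟙 P := by
        rw [lemA, MonoidalCategory.whiskerLeft_comp]; monoidal
    _ = trTw N Nv ηN εN (Q ◁ h ≫ f) := by
        dsimp only [trTw]; rw [comp_whiskerRight]; monoidal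
end

section
/- Let C be a symmetric monoidal category, let M and N be dualizable objects (so that M ⊗ N is dualizable with dual Mᵛ ⊗ Nᵛ), and let f : Q ⊗ N ⊗ M → M ⊗ N ⊗ P be a morphism. Then the trace with respect to M ⊗ N of the composite f ∘ (id_Q ⊗ s) : Q ⊗ (M ⊗ N) → (M ⊗ N) ⊗ P (where s : M ⊗ N ≅ N ⊗ M is the symmetry) equals the iterated trace tr_N(tr_M(f)): first take the trace of f with respect to M, obtaining a morphism Q ⊗ N → N ⊗ P, then take its trace with respect to N, obtaining a morphism Q → P. -/
open CategoryTheory MonoidalCategory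

universe v u

variable {C : Type u} [Category.{v} C] [MonoidalCategory C] [SymmetricCategory C]

/-- The coevaluation exhibiting `Mᵛ ⊗ Nᵛ` as dual of `M ⊗ N`. -/
def ηTens (M Mv N Nv : C) (ηM : 𝟙_ C ⟶ M ⊗ Mv) (ηN : 𝟙_ C ⟶ N ⊗ Nv) :
    𝟙_ C ⟶ (M ⊗ N) ⊗ (Mv ⊗ Nv) :=
  ηM ≫ M ◁ (λ_ Mv).inv ≫ M ◁ (ηN ▷ Mv) ≫ M ◁ (α_ N Nv Mv).hom ≫
    M ◁ (N ◁ (β_ Nv Mv).hom) ≫ (α_ M N (Mv ⊗ Nv)).inv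

/-- The evaluation exhibiting `Mᵛ ⊗ Nᵛ` as dual of `M ⊗ N`. -/
def εTens (M Mv N Nv : C) (εM : Mv ⊗ M ⟶ 𝟙_ C) (εN : Nv ⊗ N ⟶ 𝟙_ C) :
    (Mv ⊗ Nv) ⊗ (M ⊗ N) ⟶ 𝟙_ C :=
  (α_ Mv Nv (M ⊗ N)).hom ≫ Mv ◁ (α_ Nv M N).inv ≫ Mv ◁ ((β_ Nv M).hom ▷ N) ≫
    Mv ◁ (α_ M Nv N).hom ≫ Mv ◁ (M ◁ εN) ≫ Mv ◁ (ρ_ M).hom ≫ εM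


open BraidedCategory

open BraidedCategory in
private lemma lemA {M Mv N Nv : C} (ηM : 𝟙_ C ⟶ M ⊗ Mv) (ηN : 𝟙_ C ⟶ N ⊗ Nv) :
    ηM ≫ M ◁ (λ_ Mv).inv ≫ M ◁ (ηN ▷ Mv) ≫ M ◁ (α_ N Nv Mv).hom ≫
      M ◁ (N ◁ (β_ Nv Mv).hom) ≫ (α_ M N (Mv ⊗ Nv)).inv ≫ (β_ M N).hom ▷ (Mv ⊗ Nv) =
    ηN ≫ N ◁ (λ_ Nv).inv ≫ N ◁ (ηM ▷ Nv) ≫ N ◁ (α_ M Mv Nv).hom ≫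
      (α_ N M (Mv ⊗ Nv)).inv := by
  have s1 : (λ_ Mv).inv ≫ ηN ▷ Mv = (ρ_ Mv).inv ≫ Mv ◁ ηN ≫ (β_ Mv (N ⊗ Nv)).hom := by
    simp [-BraidedCategory.braiding_tensor_right_hom, -BraidedCategory.braiding_tensor_left_hom]
  rw [← MonoidalCategory.whiskerLeft_comp_assoc, s1]
  trans (λ_ (𝟙_ C)).inv ≫ ηM ▷ (𝟙_ C) ≫ (M ⊗ Mv) ◁ ηN ≫
      ((α_ M Mv (N ⊗ Nv)).hom ≫ M ◁ (β_ Mv (N ⊗ Nv)).hom ≫ M ◁ (α_ N Nv Mv).hom ≫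
        M ◁ (N ◁ (β_ Nv Mv).hom) ≫ (α_ M N (Mv ⊗ Nv)).inv ≫ (β_ M N).hom ▷ (Mv ⊗ Nv))
  · simp only [MonoidalCategory.whiskerLeft_comp, Category.assoc]
    monoidal
  have A2 : (α_ M Mv (N ⊗ Nv)).hom ≫ M ◁ (β_ Mv (N ⊗ Nv)).hom ≫ M ◁ (α_ N Nv Mv).hom ≫
      M ◁ (N ◁ (β_ Nv Mv).hom) ≫ (α_ M N (Mv ⊗ Nv)).inv ≫ (β_ M N).hom ▷ (Mv ⊗ Nv) =
      (α_ (M ⊗ Mv) N Nv).inv ≫ (β_ (M ⊗ Mv) N).hom ▷ Nv ≫ (α_ N (M ⊗ Mv) Nv).hom ≫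
      N ◁ (α_ M Mv Nv).hom ≫ (α_ N M (Mv ⊗ Nv)).inv := by
    rw [braiding_tensor_right_hom, braiding_tensor_left_hom]
    simp only [MonoidalCategory.whiskerLeft_comp, comp_whiskerRight, Category.assoc]
    simp only [← MonoidalCategory.whiskerLeft_comp_assoc, ← MonoidalCategory.whiskerLeft_comp,
      Iso.inv_hom_id_assoc, SymmetricCategory.symmetry_assoc, SymmetricCategory.symmetry,
      MonoidalCategory.whiskerLeft_id]
    monoidal
  rw [← whisker_exchange_assoc, A2]
  trans (λ_ (𝟙_ C)).inv ≫ (𝟙_ C) ◁ ηN ≫ (α_ (𝟙_ C) N Nv).inv ≫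
      ((ηM ▷ N ≫ (β_ (M ⊗ Mv) N).hom) ▷ Nv) ≫ (α_ N (M ⊗ Mv) Nv).hom ≫
      N ◁ (α_ M Mv Nv).hom ≫ (α_ N M (Mv ⊗ Nv)).inv
  · monoidal
  rw [braiding_naturality_left, braiding_tensorUnit_left]
  monoidal

open BraidedCategory in
private lemma hpre {M Mv N Nv Q : C} (ηM : 𝟙_ C ⟶ M ⊗ Mv) (ηN : 𝟙_ C ⟶ N ⊗ Nv) :
    Q ◁ ηM ≫ Q ◁ M ◁ (λ_ Mv).inv ≫ Q ◁ M ◁ ηN ▷ Mv ≫ Q ◁ M ◁ (α_ N Nv Mv).hom ≫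
      Q ◁ M ◁ N ◁ (β_ Nv Mv).hom ≫ Q ◁ (α_ M N (Mv ⊗ Nv)).inv ≫
      Q ◁ (α_ (M ⊗ N) Mv Nv).inv ≫ Q ◁ (β_ M N).hom ▷ Mv ▷ Nv ≫
      (α_ Q ((N ⊗ M) ⊗ Mv) Nv).inv ≫ (α_ Q (N ⊗ M) Mv).inv ▷ Nv ≫
      (α_ Q N M).inv ▷ Mv ▷ Nv =
    Q ◁ ηN ≫ Q ◁ N ◁ (λ_ Nv).inv ≫ Q ◁ N ◁ ηM ▷ Nv ≫
      (α_ Q N ((M ⊗ Mv) ⊗ Nv)).inv ≫ (α_ (Q ⊗ N) (M ⊗ Mv) Nv).inv ≫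
      (α_ (Q ⊗ N) M Mv).inv ▷ Nv := by
  trans Q ◁ (ηM ≫ M ◁ (λ_ Mv).inv ≫ M ◁ (ηN ▷ Mv) ≫ M ◁ (α_ N Nv Mv).hom ≫
      M ◁ (N ◁ (β_ Nv Mv).hom) ≫ (α_ M N (Mv ⊗ Nv)).inv ≫ (β_ M N).hom ▷ (Mv ⊗ Nv)) ≫
      (α_ Q (N ⊗ M) (Mv ⊗ Nv)).inv ≫ (α_ Q N M).inv ▷ (Mv ⊗ Nv) ≫
      (α_ ((Q ⊗ N) ⊗ M) Mv Nv).inv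
  · monoidal
  rw [lemA]
  monoidal

open BraidedCategory in
private lemma lemE {M Mv N Nv P : C} (εM : Mv ⊗ M ⟶ 𝟙_ C) (εN : Nv ⊗ N ⟶ 𝟙_ C) :
    (α_ Mv M N).hom ▷ P ▷ Nv ≫ (α_ (Mv ⊗ M ⊗ N) P Nv).hom ≫
      (α_ Mv (M ⊗ N) (P ⊗ Nv)).hom ≫ Mv ◁ (α_ M N (P ⊗ Nv)).hom ≫
      Mv ◁ M ◁ N ◁ (β_ P Nv).hom ≫ Mv ◁ M ◁ (α_ N Nv P).inv ≫
      Mv ◁ M ◁ (β_ N Nv).hom ▷ P ≫ Mv ◁ M ◁ εN ▷ P ≫ Mv ◁ M ◁ (λ_ P).hom ≫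
      (α_ Mv M P).inv ≫ εM ▷ P ≫ (λ_ P).hom =
    εM ▷ N ▷ P ▷ Nv ≫ (α_ (𝟙_ C) N P).hom ▷ Nv ≫ (α_ (𝟙_ C) (N ⊗ P) Nv).hom ≫
      (λ_ ((N ⊗ P) ⊗ Nv)).hom ≫ (α_ N P Nv).hom ≫ N ◁ (β_ P Nv).hom ≫
      (α_ N Nv P).inv ≫ (β_ N Nv).hom ▷ P ≫ εN ▷ P ≫ (λ_ P).hom := by
  trans (α_ ((Mv ⊗ M) ⊗ N) P Nv).hom ≫ (α_ (Mv ⊗ M) N (P ⊗ Nv)).hom ≫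
      (Mv ⊗ M) ◁ (N ◁ (β_ P Nv).hom ≫ (α_ N Nv P).inv ≫ (β_ N Nv).hom ▷ P ≫
        εN ▷ P ≫ (λ_ P).hom) ≫ εM ▷ P ≫ (λ_ P).hom
  · monoidal
  rw [whisker_exchange_assoc]
  monoidal

open BraidedCategory in
private lemma lemC {M Mv N Nv P : C} :
    Mv ◁ (α_ M Nv N).inv ▷ P ≫ Mv ◁ (β_ M Nv).hom ▷ N ▷ P ≫
      Mv ◁ (α_ Nv M N).hom ▷ P ≫ Mv ◁ (α_ Nv M N).inv ▷ P ≫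
      Mv ◁ (β_ Nv M).hom ▷ N ▷ P ≫ Mv ◁ (α_ M Nv N).hom ▷ P =
      𝟙 (Mv ⊗ (M ⊗ (Nv ⊗ N)) ⊗ P) := by
  simp only [← MonoidalCategory.whiskerLeft_comp_assoc, ← MonoidalCategory.whiskerLeft_comp,
    ← comp_whiskerRight_assoc, ← comp_whiskerRight, Iso.inv_hom_id_assoc, Iso.inv_hom_id,
    Iso.hom_inv_id_assoc, SymmetricCategory.symmetry_assoc, SymmetricCategory.symmetry,
    id_whiskerRight, MonoidalCategory.whiskerLeft_id, Category.id_comp]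

set_option maxHeartbeats 4000000 in
/-- Vanishing II: the trace with respect to `M ⊗ N` of `f ∘ (id_Q ⊗ s)` equals the
iterated trace `tr_N(tr_M(f))`. -/
theorem trace_vanishing {M Mv N Nv Q P : C}
    (ηM : 𝟙_ C ⟶ M ⊗ Mv) (εM : Mv ⊗ M ⟶ 𝟙_ C) (hM : IsDualPair M Mv ηM εM)
    (ηN : 𝟙_ C ⟶ N ⊗ Nv) (εN : Nv ⊗ N ⟶ 𝟙_ C) (hN : IsDualPair N Nv ηN εN)
    (f : (Q ⊗ N) ⊗ M ⟶ M ⊗ (N ⊗ P)) :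
    trTw (M ⊗ N) (Mv ⊗ Nv) (ηTens M Mv N Nv ηM ηN) (εTens M Mv N Nv εM εN)
        (Q ◁ (β_ M N).hom ≫ (α_ Q N M).inv ≫ f ≫ (α_ M N P).inv) =
      trTw N Nv ηN εN (trTw M Mv ηM εM f) := by
  simp only [trTw, ηTens, εTens]
  simp [braiding_tensor_left_hom, braiding_tensor_right_hom, braiding_naturality_left,
    braiding_naturality_right, braiding_tensorUnit_left, braiding_tensorUnit_right,
    whisker_exchange, SymmetricCategory.symmetry, SymmetricCategory.symmetry_assoc,
    yang_baxter, yang_baxter_assoc]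
  rw [reassoc_of% hpre ηM ηN]
  have hc : Mv ◁ (α_ M Nv N).inv ▷ P ≫ Mv ◁ (β_ M Nv).hom ▷ N ▷ P ≫
      Mv ◁ (β_ Nv M).hom ▷ N ▷ P ≫ Mv ◁ (α_ M Nv N).hom ▷ P =
      𝟙 (Mv ⊗ (M ⊗ (Nv ⊗ N)) ⊗ P) := by
    simp only [← MonoidalCategory.whiskerLeft_comp_assoc, ← MonoidalCategory.whiskerLeft_comp,
      ← comp_whiskerRight_assoc, ← comp_whiskerRight, Iso.inv_hom_id_assoc, Iso.inv_hom_id,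
      Iso.hom_inv_id_assoc, SymmetricCategory.symmetry_assoc, SymmetricCategory.symmetry,
      id_whiskerRight, MonoidalCategory.whiskerLeft_id, Category.id_comp]
  rw [reassoc_of% hc]
  simp only [MonoidalCategory.whiskerLeft_inv_hom_assoc]
  rw [lemE εM εN]
  monoidal
end

section
/- Let C be a symmetric monoidal category, let M and N be dualizable objects, and let f : Q ⊗ M → M ⊗ P and g : P ⊗ N → N ⊗ K be morphisms. Then the trace with respect to M ⊗ N of the composite (id_M ⊗ g) ∘ (f ⊗ id_N) : Q ⊗ M ⊗ N → M ⊗ N ⊗ K equals the composite of traces tr(g) ∘ tr(f) : Q → K. -/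
set_option maxHeartbeats 4000000

open CategoryTheory MonoidalCategory

universe v u

variable {C : Type u} [Category.{v} C] [MonoidalCategory C] [SymmetricCategory C]

open BraidedCategory in
/-- Composition: `tr_{M ⊗ N}((id_M ⊗ g) ∘ (f ⊗ id_N)) = tr_N(g) ∘ tr_M(f)`. -/
theorem trace_composition {M Mv N Nv Q P K : C}
    (ηM : 𝟙_ C ⟶ M ⊗ Mv) (εM : Mv ⊗ M ⟶ 𝟙_ C) (hM : IsDualPair M Mv ηM εM)
    (ηN : 𝟙_ C ⟶ N ⊗ Nv) (εN : Nv ⊗ N ⟶ 𝟙_ C) (hN : IsDualPair N Nv ηN εN)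
    (f : Q ⊗ M ⟶ M ⊗ P) (g : P ⊗ N ⟶ N ⊗ K) :
    trTw (M ⊗ N) (Mv ⊗ Nv) (ηTens M Mv N Nv ηM ηN) (εTens M Mv N Nv εM εN)
        ((α_ Q M N).inv ≫ f ▷ N ≫ (α_ M P N).hom ≫ M ◁ g ≫ (α_ M N K).inv) =
      trTw M Mv ηM εM f ≫ trTw N Nv ηN εN g := by
  have hR : trTw M Mv ηM εM f ≫ trTw N Nv ηN εN g =
      𝟙 Q ⊗≫ Q ◁ ηM ⊗≫ f ▷ Mv ⊗≫
        (M ⊗ P) ◁ ((λ_ Mv).inv ≫ ηN ▷ Mv ≫ (α_ N Nv Mv).hom) ⊗≫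
        M ◁ (g ▷ (Nv ⊗ Mv)) ⊗≫ M ◁ ((N ⊗ K) ◁ (β_ Nv Mv).hom) ⊗≫
        (M ⊗ N) ◁ ((β_ K Mv).hom ▷ Nv) ⊗≫ M ◁ ((β_ N Mv).hom ▷ (K ⊗ Nv)) ⊗≫
        (β_ M Mv).hom ▷ (N ⊗ (K ⊗ Nv)) ⊗≫
        (Mv ⊗ M) ◁ (N ◁ (β_ K Nv).hom) ⊗≫ (Mv ⊗ M) ◁ ((β_ N Nv).hom ▷ K) ⊗≫
        (Mv ⊗ M) ◁ (εN ▷ K) ⊗≫ εM ▷ K ⊗≫ 𝟙 K := by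
    calc trTw M Mv ηM εM f ≫ trTw N Nv ηN εN g
        = 𝟙 Q ⊗≫ Q ◁ ηM ⊗≫ f ▷ Mv ⊗≫ M ◁ (β_ P Mv).hom ⊗≫
            (((β_ M Mv).hom ≫ εM) ▷ P ≫
              𝟙_ C ◁ ((ρ_ P).inv ≫ P ◁ ηN ≫ (α_ P N Nv).inv ≫ g ▷ Nv)) ⊗≫
            N ◁ (β_ K Nv).hom ⊗≫ (β_ N Nv).hom ▷ K ⊗≫ εN ▷ K ⊗≫ 𝟙 K := by
          simp only [trTw]
          rw [braiding_tensor_left_hom M P Mv, braiding_tensor_left_hom N K Nv]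
          monoidal
      _ = 𝟙 Q ⊗≫ Q ◁ ηM ⊗≫ f ▷ Mv ⊗≫ M ◁ (β_ P Mv).hom ⊗≫
            ((M ⊗ Mv) ◁ ((ρ_ P).inv ≫ P ◁ ηN ≫ (α_ P N Nv).inv ≫ g ▷ Nv) ≫
              ((β_ M Mv).hom ≫ εM) ▷ ((N ⊗ K) ⊗ Nv)) ⊗≫
            N ◁ (β_ K Nv).hom ⊗≫ (β_ N Nv).hom ▷ K ⊗≫ εN ▷ K ⊗≫ 𝟙 K := by
          rw [← whisker_exchange]
      _ = 𝟙 Q ⊗≫ Q ◁ ηM ⊗≫ f ▷ Mv ⊗≫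
            M ◁ ((β_ P Mv).hom ≫
              Mv ◁ ((ρ_ P).inv ≫ P ◁ ηN ≫ (α_ P N Nv).inv ≫ g ▷ Nv)) ⊗≫
            (β_ M Mv).hom ▷ ((N ⊗ K) ⊗ Nv) ⊗≫
            (εM ▷ ((N ⊗ K) ⊗ Nv) ≫
              𝟙_ C ◁ ((α_ N K Nv).hom ≫ N ◁ (β_ K Nv).hom ≫ (α_ N Nv K).inv ≫
                (β_ N Nv).hom ▷ K ≫ εN ▷ K ≫ (λ_ K).hom)) ⊗≫ 𝟙 K := by
          monoidal
      _ = 𝟙 Q ⊗≫ Q ◁ ηM ⊗≫ f ▷ Mv ⊗≫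
            M ◁ ((β_ P Mv).hom ≫
              Mv ◁ ((ρ_ P).inv ≫ P ◁ ηN ≫ (α_ P N Nv).inv ≫ g ▷ Nv)) ⊗≫
            (β_ M Mv).hom ▷ ((N ⊗ K) ⊗ Nv) ⊗≫
            ((Mv ⊗ M) ◁ ((α_ N K Nv).hom ≫ N ◁ (β_ K Nv).hom ≫ (α_ N Nv K).inv ≫
                (β_ N Nv).hom ▷ K ≫ εN ▷ K ≫ (λ_ K).hom) ≫ εM ▷ K) ⊗≫ 𝟙 K := by
          rw [← whisker_exchange]
      _ = 𝟙 Q ⊗≫ Q ◁ ηM ⊗≫ f ▷ Mv ⊗≫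
            M ◁ (((ρ_ P).inv ≫ P ◁ ηN ≫ (α_ P N Nv).inv ≫ g ▷ Nv) ▷ Mv ≫
              (β_ ((N ⊗ K) ⊗ Nv) Mv).hom) ⊗≫
            (β_ M Mv).hom ▷ ((N ⊗ K) ⊗ Nv) ⊗≫
            ((Mv ⊗ M) ◁ ((α_ N K Nv).hom ≫ N ◁ (β_ K Nv).hom ≫ (α_ N Nv K).inv ≫
                (β_ N Nv).hom ▷ K ≫ εN ▷ K ≫ (λ_ K).hom) ≫ εM ▷ K) ⊗≫ 𝟙 K := by
          rw [← braiding_naturality_left]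
      _ = _ := by
          rw [braiding_tensor_left_hom (N ⊗ K) Nv Mv, braiding_tensor_left_hom N K Mv]
          monoidal
  calc trTw (M ⊗ N) (Mv ⊗ Nv) (ηTens M Mv N Nv ηM ηN) (εTens M Mv N Nv εM εN)
        ((α_ Q M N).inv ≫ f ▷ N ≫ (α_ M P N).hom ≫ M ◁ g ≫ (α_ M N K).inv)
      = 𝟙 Q ⊗≫ Q ◁ ηM ⊗≫
          (Q ⊗ M) ◁ ((λ_ Mv).inv ≫ ηN ▷ Mv ≫ (α_ N Nv Mv).hom ≫ N ◁ (β_ Nv Mv).hom) ⊗≫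
          f ▷ (N ⊗ (Mv ⊗ Nv)) ⊗≫ M ◁ (g ▷ (Mv ⊗ Nv)) ⊗≫
          (β_ ((M ⊗ N) ⊗ K) (Mv ⊗ Nv)).hom ⊗≫
          Mv ◁ ((β_ Nv M).hom ▷ N ▷ K) ⊗≫ Mv ◁ M ◁ εN ▷ K ⊗≫ εM ▷ K ⊗≫ 𝟙 K := by
        simp only [trTw, ηTens, εTens]
        monoidal
    _ = 𝟙 Q ⊗≫ Q ◁ ηM ⊗≫
          (Q ⊗ M) ◁ ((λ_ Mv).inv ≫ ηN ▷ Mv ≫ (α_ N Nv Mv).hom ≫ N ◁ (β_ Nv Mv).hom) ⊗≫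
          f ▷ (N ⊗ (Mv ⊗ Nv)) ⊗≫ M ◁ (g ▷ (Mv ⊗ Nv)) ⊗≫
          (M ⊗ N) ◁ ((β_ K Mv).hom ▷ Nv) ⊗≫ M ◁ ((β_ N Mv).hom ▷ (K ⊗ Nv)) ⊗≫
          (β_ M Mv).hom ▷ (N ⊗ (K ⊗ Nv)) ⊗≫
          (Mv ⊗ M) ◁ (N ◁ (β_ K Nv).hom) ⊗≫ (Mv ⊗ M) ◁ ((β_ N Nv).hom ▷ K) ⊗≫
          Mv ◁ (((β_ M Nv).hom ≫ (β_ Nv M).hom) ▷ (N ⊗ K)) ⊗≫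
          Mv ◁ M ◁ εN ▷ K ⊗≫ εM ▷ K ⊗≫ 𝟙 K := by
        rw [braiding_tensor_right_hom ((M ⊗ N) ⊗ K) Mv Nv, braiding_tensor_left_hom (M ⊗ N) K Mv,
          braiding_tensor_left_hom M N Mv, braiding_tensor_left_hom (M ⊗ N) K Nv,
          braiding_tensor_left_hom M N Nv]
        monoidal
    _ = 𝟙 Q ⊗≫ Q ◁ ηM ⊗≫
          ((Q ⊗ M) ◁ ((λ_ Mv).inv ≫ ηN ▷ Mv ≫ (α_ N Nv Mv).hom ≫ N ◁ (β_ Nv Mv).hom) ≫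
            f ▷ (N ⊗ (Mv ⊗ Nv))) ⊗≫ M ◁ (g ▷ (Mv ⊗ Nv)) ⊗≫
          (M ⊗ N) ◁ ((β_ K Mv).hom ▷ Nv) ⊗≫ M ◁ ((β_ N Mv).hom ▷ (K ⊗ Nv)) ⊗≫
          (β_ M Mv).hom ▷ (N ⊗ (K ⊗ Nv)) ⊗≫
          (Mv ⊗ M) ◁ (N ◁ (β_ K Nv).hom) ⊗≫ (Mv ⊗ M) ◁ ((β_ N Nv).hom ▷ K) ⊗≫
          (Mv ⊗ M) ◁ (εN ▷ K) ⊗≫ εM ▷ K ⊗≫ 𝟙 K := by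
        rw [SymmetricCategory.symmetry]
        monoidal
    _ = 𝟙 Q ⊗≫ Q ◁ ηM ⊗≫
          (f ▷ Mv ≫
            (M ⊗ P) ◁ ((λ_ Mv).inv ≫ ηN ▷ Mv ≫ (α_ N Nv Mv).hom ≫ N ◁ (β_ Nv Mv).hom)) ⊗≫
          M ◁ (g ▷ (Mv ⊗ Nv)) ⊗≫
          (M ⊗ N) ◁ ((β_ K Mv).hom ▷ Nv) ⊗≫ M ◁ ((β_ N Mv).hom ▷ (K ⊗ Nv)) ⊗≫
          (β_ M Mv).hom ▷ (N ⊗ (K ⊗ Nv)) ⊗≫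
          (Mv ⊗ M) ◁ (N ◁ (β_ K Nv).hom) ⊗≫ (Mv ⊗ M) ◁ ((β_ N Nv).hom ▷ K) ⊗≫
          (Mv ⊗ M) ◁ (εN ▷ K) ⊗≫ εM ▷ K ⊗≫ 𝟙 K := by
        rw [whisker_exchange]
    _ = 𝟙 Q ⊗≫ Q ◁ ηM ⊗≫ f ▷ Mv ⊗≫
          (M ⊗ P) ◁ ((λ_ Mv).inv ≫ ηN ▷ Mv ≫ (α_ N Nv Mv).hom) ⊗≫
          M ◁ ((P ⊗ N) ◁ (β_ Nv Mv).hom ≫ g ▷ (Mv ⊗ Nv)) ⊗≫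
          (M ⊗ N) ◁ ((β_ K Mv).hom ▷ Nv) ⊗≫ M ◁ ((β_ N Mv).hom ▷ (K ⊗ Nv)) ⊗≫
          (β_ M Mv).hom ▷ (N ⊗ (K ⊗ Nv)) ⊗≫
          (Mv ⊗ M) ◁ (N ◁ (β_ K Nv).hom) ⊗≫ (Mv ⊗ M) ◁ ((β_ N Nv).hom ▷ K) ⊗≫
          (Mv ⊗ M) ◁ (εN ▷ K) ⊗≫ εM ▷ K ⊗≫ 𝟙 K := by
        monoidal
    _ = 𝟙 Q ⊗≫ Q ◁ ηM ⊗≫ f ▷ Mv ⊗≫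
          (M ⊗ P) ◁ ((λ_ Mv).inv ≫ ηN ▷ Mv ≫ (α_ N Nv Mv).hom) ⊗≫
          M ◁ (g ▷ (Nv ⊗ Mv) ≫ (N ⊗ K) ◁ (β_ Nv Mv).hom) ⊗≫
          (M ⊗ N) ◁ ((β_ K Mv).hom ▷ Nv) ⊗≫ M ◁ ((β_ N Mv).hom ▷ (K ⊗ Nv)) ⊗≫
          (β_ M Mv).hom ▷ (N ⊗ (K ⊗ Nv)) ⊗≫
          (Mv ⊗ M) ◁ (N ◁ (β_ K Nv).hom) ⊗≫ (Mv ⊗ M) ◁ ((β_ N Nv).hom ▷ K) ⊗≫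
          (Mv ⊗ M) ◁ (εN ▷ K) ⊗≫ εM ▷ K ⊗≫ 𝟙 K := by
        rw [whisker_exchange]
    _ = 𝟙 Q ⊗≫ Q ◁ ηM ⊗≫ f ▷ Mv ⊗≫
          (M ⊗ P) ◁ ((λ_ Mv).inv ≫ ηN ▷ Mv ≫ (α_ N Nv Mv).hom) ⊗≫
          M ◁ (g ▷ (Nv ⊗ Mv)) ⊗≫ M ◁ ((N ⊗ K) ◁ (β_ Nv Mv).hom) ⊗≫
          (M ⊗ N) ◁ ((β_ K Mv).hom ▷ Nv) ⊗≫ M ◁ ((β_ N Mv).hom ▷ (K ⊗ Nv)) ⊗≫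
          (β_ M Mv).hom ▷ (N ⊗ (K ⊗ Nv)) ⊗≫
          (Mv ⊗ M) ◁ (N ◁ (β_ K Nv).hom) ⊗≫ (Mv ⊗ M) ◁ ((β_ N Nv).hom ▷ K) ⊗≫
          (Mv ⊗ M) ◁ (εN ▷ K) ⊗≫ εM ▷ K ⊗≫ 𝟙 K := by
        monoidal
    _ = trTw M Mv ηM εM f ≫ trTw N Nv ηN εN g := hR.symm
end
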